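/- arXiv:1901.03529 — 3 statements merged into one kernel-verified Lean document; each statement's English description precedes it below -/
import Mathlib

section
/- For every u in the Schwartz space 𝒮(ℝⁿ), every x ∈ ℝⁿ, every s ≥ 0 and every t > s, the map t ↦ H_{t,s}u(x) is differentiable at t and its derivative satisfies ∂/∂t H_{t,s}u(x) = −(2π)^{−n/2} ∫_{ℝⁿ} e^{ix·ξ} q(t,ξ) exp(−∫_s^t q(τ,ξ)dτ) û(ξ) dξ, i.e. ∂/∂t H_{t,s}u = −q(t,D)H_{t,s}u where q(t,D) is the pseudo-differential operator with symbol q(t,ξ). -/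
/-!
The `t`-derivative of the integrand `e^{ix·ξ} e^{-∫_s^t q(τ,ξ) dτ} û(ξ)` is `-q(t,ξ)` times the
integrand. As `q ≥ 0`, the exponential factor has modulus at most `1` for `t ≥ s`, so near `t` these
derivatives are dominated by `C (1 + |ξ|²) |û(ξ)|`, which is integrable because `û` is a rescaled
Schwartz function; differentiation under the integral sign gives the formula. To work with a symbol
that is continuous on all of `ℝ × ℝⁿ`, `q` is replaced by `q(max τ 0, ξ)`, which changes none of the
integrals `∫_s^t` with `0 ≤ s, t`.
-/

open MeasureTheory Real Filter intervalIntegral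

/-- The Fourier transform with normalization `(2π)^(-n/2)`. -/
noncomputable def fourierTransform {n : ℕ} (u : EuclideanSpace ℝ (Fin n) → ℂ)
    (ξ : EuclideanSpace ℝ (Fin n)) : ℂ :=
  (((2 * π) ^ (-(n : ℝ) / 2) : ℝ) : ℂ) *
    ∫ x, Complex.exp (-(Complex.I * ((inner ℝ x ξ : ℝ) : ℂ))) * u x

/-- The operator `H_{t,s}` with symbol `exp(-∫_s^t q(τ,ξ)dτ)`. -/
noncomputable def Hop {n : ℕ} (q : ℝ → EuclideanSpace ℝ (Fin n) → ℝ)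
    (t s : ℝ) (u : EuclideanSpace ℝ (Fin n) → ℂ) (x : EuclideanSpace ℝ (Fin n)) : ℂ :=
  (((2 * π) ^ (-(n : ℝ) / 2) : ℝ) : ℂ) *
    ∫ ξ, Complex.exp (Complex.I * ((inner ℝ x ξ : ℝ) : ℂ)) *
      Complex.exp (-(((∫ τ in s..t, q τ ξ) : ℝ) : ℂ)) * fourierTransform u ξ

section DominatedDerivative

variable {α : Type*} [MeasurableSpace α] {μ : Measure α}

theorem norm_cexp_neg_ofReal_le_one {r : ℝ} (hr : 0 ≤ r) : ‖Complex.exp (-(r : ℂ))‖ ≤ 1 := by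
  rw [← Complex.ofReal_neg, Complex.norm_exp_ofReal, Real.exp_le_one_iff]
  linarith

theorem hasDerivAt_integral_cexp_neg_mul {A a : ℝ → α → ℝ} {g : α → ℂ} {w : α → ℝ} {t ε : ℝ}
    (hε : 0 < ε) (hg : Integrable g μ) (hwg : Integrable (fun ξ => w ξ * ‖g ξ‖) μ)
    (hA_meas : ∀ t', AEStronglyMeasurable (A t') μ) (ha_meas : AEStronglyMeasurable (a t) μ)
    (hA_nonneg : ∀ t' ∈ Metric.ball t ε, ∀ ξ, 0 ≤ A t' ξ)
    (ha_le : ∀ t' ∈ Metric.ball t ε, ∀ ξ, |a t' ξ| ≤ w ξ)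
    (hA_deriv : ∀ ξ, ∀ t' ∈ Metric.ball t ε, HasDerivAt (A · ξ) (a t' ξ) t') :
    HasDerivAt (fun t' => ∫ ξ, Complex.exp (-(A t' ξ : ℂ)) * g ξ ∂μ)
      (∫ ξ, -(a t ξ * Complex.exp (-(A t ξ : ℂ)) * g ξ) ∂μ) t := by
  have hcexp_meas : ∀ t', AEStronglyMeasurable (fun ξ => Complex.exp (-(A t' ξ : ℂ))) μ :=
    fun t' => (Complex.continuous_exp.comp Complex.continuous_ofReal.neg).comp_aestronglyMeasurable
      (hA_meas t')
  have hF_int : Integrable (fun ξ => Complex.exp (-(A t ξ : ℂ)) * g ξ) μ :=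
    hg.bdd_mul (hcexp_meas t) (Eventually.of_forall fun ξ =>
      norm_cexp_neg_ofReal_le_one (hA_nonneg t (Metric.mem_ball_self hε) ξ))
  have hF'_bound : ∀ ξ, ∀ t' ∈ Metric.ball t ε,
      ‖-(a t' ξ * Complex.exp (-(A t' ξ : ℂ)) * g ξ)‖ ≤ w ξ * ‖g ξ‖ := by
    intro ξ t' ht'
    rw [norm_neg, norm_mul, norm_mul, Complex.norm_real, Real.norm_eq_abs]
    gcongr
    exact (mul_le_of_le_one_right (abs_nonneg _)
      (norm_cexp_neg_ofReal_le_one (hA_nonneg t' ht' ξ))).trans (ha_le t' ht' ξ)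
  have hF'_deriv : ∀ ξ, ∀ t' ∈ Metric.ball t ε, HasDerivAt (fun r => Complex.exp (-(A r ξ : ℂ)) * g ξ)
      (-(a t' ξ * Complex.exp (-(A t' ξ : ℂ)) * g ξ)) t' := by
    intro ξ t' ht'
    exact ((hA_deriv ξ t' ht').ofReal_comp.neg.cexp.mul_const (g ξ)).congr_deriv
      (by simp only [Pi.neg_apply]; ring)
  exact (hasDerivAt_integral_of_dominated_loc_of_deriv_le (Metric.ball_mem_nhds t hε)
    (Eventually.of_forall fun t' => (hcexp_meas t').mul hg.1) hF_int
    (((Complex.continuous_ofReal.comp_aestronglyMeasurable ha_meas).mul (hcexp_meas t)).mul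
      hg.1).neg
    (Eventually.of_forall hF'_bound) hwg (Eventually.of_forall hF'_deriv)).2

end DominatedDerivative

section PrimitiveSymbol

variable {α : Type*} [MeasurableSpace α] [TopologicalSpace α] [OpensMeasurableSpace α]
  {μ : Measure α}

theorem hasDerivAt_integral_cexp_neg_intervalIntegral_mul {Q : ℝ → α → ℝ} {g : α → ℂ}
    {w : α → ℝ} (hQ : Continuous fun p : ℝ × α => Q p.1 p.2) (hQ_nonneg : ∀ τ ξ, 0 ≤ Q τ ξ)
    (hQ_le : ∀ τ ξ, Q τ ξ ≤ w ξ) (hg : Integrable g μ)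
    (hwg : Integrable (fun ξ => w ξ * ‖g ξ‖) μ) {s t : ℝ} (hst : s < t) :
    HasDerivAt (fun t' => ∫ ξ, Complex.exp (-((∫ τ in s..t', Q τ ξ : ℝ) : ℂ)) * g ξ ∂μ)
      (∫ ξ, -(Q t ξ * Complex.exp (-((∫ τ in s..t, Q τ ξ : ℝ) : ℂ)) * g ξ) ∂μ) t := by
  have hQ_time : ∀ ξ, Continuous (Q · ξ) := fun ξ => hQ.comp (.prodMk_left ξ)
  refine hasDerivAt_integral_cexp_neg_mul (sub_pos.2 hst) hg hwg (fun t' => ?_)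
    (hQ.comp (.prodMk_right t)).aestronglyMeasurable (fun t' ht' ξ => ?_)
    (fun t' _ ξ => by rw [abs_of_nonneg (hQ_nonneg t' ξ)]; exact hQ_le t' ξ)
    (fun ξ t' _ => (hQ_time ξ).integral_hasStrictDerivAt s t' |>.hasDerivAt)
  · exact (continuous_parametric_intervalIntegral_of_continuous'
      (f := fun ξ τ => Q τ ξ) (hQ.comp continuous_swap) s t').aestronglyMeasurable
  · have hst' : s ≤ t' := by
      rw [Metric.mem_ball, Real.dist_eq, abs_lt] at ht'
      linarith
    exact intervalIntegral.integral_nonneg hst' fun τ _ => hQ_nonneg τ ξ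

end PrimitiveSymbol

theorem ContinuousOn.continuous_comp_max_zero {X E : Type*} [TopologicalSpace X]
    [TopologicalSpace E] {f : ℝ × X → E} (hf : ContinuousOn f (Set.Ici 0 ×ˢ Set.univ)) :
    Continuous fun p : ℝ × X => f (max p.1 0, p.2) :=
  hf.comp_continuous ((continuous_fst.max continuous_const).prodMk continuous_snd)
    fun p => ⟨le_max_right p.1 0, trivial⟩

theorem intervalIntegral.integral_comp_max_zero {E : Type*} [NormedAddCommGroup E] [NormedSpace ℝ E]
    (f : ℝ → E) {a b : ℝ} (ha : 0 ≤ a) (hb : 0 ≤ b) :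
    ∫ τ in a..b, f (max τ 0) = ∫ τ in a..b, f τ :=
  intervalIntegral.integral_congr fun _ hτ => congrArg f (max_eq_left ((le_inf ha hb).trans hτ.1))

section Fourier

variable {n : ℕ}

theorem fourierTransform_eq_fourier (u : EuclideanSpace ℝ (Fin n) → ℂ)
    (ξ : EuclideanSpace ℝ (Fin n)) :
    fourierTransform u ξ =
      (((2 * π) ^ (-(n : ℝ) / 2) : ℝ) : ℂ) * FourierTransform.fourier u ((2 * π)⁻¹ • ξ) := by
  rw [fourierTransform, Real.fourier_eq']
  congr 1
  refine integral_congr_ae (Eventually.of_forall fun v => ?_)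
  have hphase : -2 * π * inner ℝ v ((2 * π)⁻¹ • ξ) = -inner ℝ v ξ := by
    rw [real_inner_smul_right]
    field_simp
  simp only [smul_eq_mul, hphase]
  push_cast
  ring_nf

theorem exists_schwartzMap_eq_fourierTransform
    (u : SchwartzMap (EuclideanSpace ℝ (Fin n)) ℂ) :
    ∃ G : SchwartzMap (EuclideanSpace ℝ (Fin n)) ℂ, ⇑G = fourierTransform ⇑u := by
  let scale : EuclideanSpace ℝ (Fin n) ≃L[ℝ] EuclideanSpace ℝ (Fin n) :=
    (LinearEquiv.smulOfNeZero ℝ _ ((2 * π)⁻¹) (by positivity)).toContinuousLinearEquiv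
  refine ⟨(((2 * π) ^ (-(n : ℝ) / 2) : ℝ) : ℂ) •
    SchwartzMap.compCLMOfContinuousLinearEquiv ℝ scale (FourierTransform.fourier u), ?_⟩
  ext ξ
  simp [fourierTransform_eq_fourier, scale, SchwartzMap.fourier_coe]

theorem integrable_fourierTransform (u : SchwartzMap (EuclideanSpace ℝ (Fin n)) ℂ) :
    Integrable (fourierTransform ⇑u) := by
  obtain ⟨G, hG⟩ := exists_schwartzMap_eq_fourierTransform u
  exact hG ▸ G.integrable

theorem integrable_one_add_sq_mul_norm_fourierTransform
    (u : SchwartzMap (EuclideanSpace ℝ (Fin n)) ℂ) :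
    Integrable fun ξ => (1 + ‖ξ‖ ^ 2) * ‖fourierTransform (⇑u) ξ‖ := by
  obtain ⟨G, hG⟩ := exists_schwartzMap_eq_fourierTransform u
  refine (G.integrable.norm.add (G.integrable_pow_mul volume 2)).congr
    (Eventually.of_forall fun ξ => ?_)
  simp only [Pi.add_apply, ← hG]
  ring

end Fourier

theorem stmt0_general {n : ℕ}
    (q : ℝ → EuclideanSpace ℝ (Fin n) → ℝ)
    (hq_cont : ContinuousOn (fun p : ℝ × EuclideanSpace ℝ (Fin n) => q p.1 p.2)
      (Set.Ici (0 : ℝ) ×ˢ Set.univ))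
    (C : ℝ)
    (hq_bound : ∀ τ, 0 ≤ τ → ∀ ξ, 0 ≤ q τ ξ ∧ q τ ξ ≤ C * (1 + ‖ξ‖ ^ 2))
    (u : SchwartzMap (EuclideanSpace ℝ (Fin n)) ℂ)
    (x : EuclideanSpace ℝ (Fin n)) (s t : ℝ) (hs : 0 ≤ s) (hst : s < t) :
    HasDerivAt (fun t' => Hop q t' s (⇑u) x)
      (-((((2 * π) ^ (-(n : ℝ) / 2) : ℝ) : ℂ) *
        ∫ ξ, Complex.exp (Complex.I * ((inner ℝ x ξ : ℝ) : ℂ)) * ((q t ξ : ℝ) : ℂ) *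
          Complex.exp (-(((∫ τ in s..t, q τ ξ) : ℝ) : ℂ)) * fourierTransform (⇑u) ξ)) t := by
  set g := fun ξ => Complex.exp (Complex.I * ((inner ℝ x ξ : ℝ) : ℂ)) * fourierTransform (⇑u) ξ
    with hg_def
  have hg_norm : ∀ ξ, ‖g ξ‖ = ‖fourierTransform (⇑u) ξ‖ := fun ξ => by
    rw [norm_mul, Complex.norm_exp_I_mul_ofReal, one_mul]
  have hg : Integrable g := (integrable_fourierTransform u).bdd_mul (c := 1) (by fun_prop)
    (Eventually.of_forall fun ξ => (Complex.norm_exp_I_mul_ofReal _).le)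
  have hwg : Integrable (fun ξ => C * (1 + ‖ξ‖ ^ 2) * ‖g ξ‖) := by
    simpa only [hg_norm, mul_assoc] using
      (integrable_one_add_sq_mul_norm_fourierTransform u).const_mul C
  have hderiv := hasDerivAt_integral_cexp_neg_intervalIntegral_mul (μ := volume)
    hq_cont.continuous_comp_max_zero (fun τ ξ => (hq_bound _ (le_max_right τ 0) ξ).1)
    (fun τ ξ => (hq_bound _ (le_max_right τ 0) ξ).2) hg hwg hst
  refine ((hderiv.const_mul (((2 * π) ^ (-(n : ℝ) / 2) : ℝ) : ℂ)).congr_of_eventuallyEq ?_)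
    |>.congr_deriv ?_
  · filter_upwards [lt_mem_nhds (hs.trans_lt hst)] with t' ht'
    rw [Hop]
    congr 1
    refine integral_congr_ae (Eventually.of_forall fun ξ => ?_)
    simp only [hg_def]
    rw [intervalIntegral.integral_comp_max_zero (q · ξ) hs ht'.le]
    ring
  · rw [MeasureTheory.integral_neg, mul_neg]
    congr 2
    refine integral_congr_ae (Eventually.of_forall fun ξ => ?_)
    simp only [hg_def]
    rw [intervalIntegral.integral_comp_max_zero (q · ξ) hs (hs.trans hst.le),
      max_eq_left (hs.trans hst.le)]
    ring

theorem stmt0 {n : ℕ} (hn : 1 ≤ n)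
    (q : ℝ → EuclideanSpace ℝ (Fin n) → ℝ)
    (hq_cont : ContinuousOn (fun p : ℝ × EuclideanSpace ℝ (Fin n) => q p.1 p.2)
      (Set.Ici (0 : ℝ) ×ˢ Set.univ))
    (C : ℝ) (hC : 0 < C)
    (hq_bound : ∀ τ, 0 ≤ τ → ∀ ξ, 0 ≤ q τ ξ ∧ q τ ξ ≤ C * (1 + ‖ξ‖ ^ 2))
    (u : SchwartzMap (EuclideanSpace ℝ (Fin n)) ℂ)
    (x : EuclideanSpace ℝ (Fin n)) (s t : ℝ) (hs : 0 ≤ s) (hst : s < t) :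
    HasDerivAt (fun t' => Hop q t' s (⇑u) x)
      (-((((2 * π) ^ (-(n : ℝ) / 2) : ℝ) : ℂ) *
        ∫ ξ, Complex.exp (Complex.I * ((inner ℝ x ξ : ℝ) : ℂ)) * ((q t ξ : ℝ) : ℂ) *
          Complex.exp (-(((∫ τ in s..t, q τ ξ) : ℝ) : ℂ)) * fourierTransform (⇑u) ξ)) t :=
  stmt0_general q hq_cont C hq_bound u x s t hs hst
end

section
/- For every δ > 0, the ratio (∫_{|ξ|>δ} e^{−Q(t,ξ)} dξ) / (∫_{ℝⁿ} e^{−Q(t,ξ)} dξ) tends to 0 as t → ∞. -/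
/-!
Since `κ₀ t ψ ≤ Q(t, ·) ≤ κ₁ t ψ`, it suffices to compare two exponential rates. Continuity,
coercivity and positivity give `m > 0` with `ψ ≥ m` on `‖ξ‖ ≥ δ`, so the numerator is
`O(e^{-κ₀ m t})`. The growth bound forces `ψ 0 = 0`, so `κ₁ ψ < κ₀ m / 2` on a small ball,
and the denominator is at least `e^{-κ₀ m t / 2}` times the volume of that ball.
-/

open MeasureTheory Real Filter Topology

/-- `Q(t,ξ) := ∫₀ᵗ q(τ,ξ) dτ`. -/
noncomputable def Qint {n : ℕ} (q : ℝ → EuclideanSpace ℝ (Fin n) → ℝ)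
    (t : ℝ) (ξ : EuclideanSpace ℝ (Fin n)) : ℝ :=
  ∫ τ in (0:ℝ)..t, q τ ξ

open Set

theorem exists_pos_le_of_tendsto_cocompact {X : Type*} [TopologicalSpace X] {f : X → ℝ}
    (hf : Continuous f) (hf_infty : Tendsto f (cocompact X) atTop) {C : Set X}
    (hC : IsClosed C) (hf_pos : ∀ x ∈ C, 0 < f x) :
    ∃ m, 0 < m ∧ ∀ x ∈ C, m ≤ f x := by
  obtain ⟨K, hK, hK_ge⟩ := mem_cocompact.mp (hf_infty.eventually_ge_atTop 1)
  obtain ⟨m, hm, hm_le⟩ := (hK.inter_right hC).exists_forall_le' hf.continuousOn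
    fun x hx => hf_pos x hx.2
  refine ⟨min m 1, lt_min hm one_pos, fun x hx => ?_⟩
  by_cases hxK : x ∈ K
  · exact (min_le_left _ _).trans (hm_le x ⟨hxK, hx⟩)
  · exact (min_le_right _ _).trans (hK_ge hxK)

theorem intervalIntegral_mem_Icc_of_forall_mem_Icc {f : ℝ → ℝ} (hf : Measurable f)
    {u v a b : ℝ} (huv : u ≤ v) (h : ∀ τ ∈ Icc u v, f τ ∈ Icc a b) :
    ∫ τ in u..v, f τ ∈ Icc ((v - u) * a) ((v - u) * b) := by
  have hf_int : IntervalIntegrable f volume u v := by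
    rw [intervalIntegrable_iff_integrableOn_Icc_of_le huv]
    refine Measure.integrableOn_of_bounded (M := |a| + |b|) measure_Icc_lt_top.ne
      hf.aestronglyMeasurable ?_
    filter_upwards [ae_restrict_mem measurableSet_Icc] with τ hτ
    obtain ⟨hlo, hhi⟩ := h τ hτ
    rw [Real.norm_eq_abs, abs_le]
    constructor <;> linarith [neg_abs_le a, le_abs_self b, abs_nonneg a, abs_nonneg b]
  constructor
  · simpa [mul_comm] using intervalIntegral.integral_mono_on huv intervalIntegrable_const hf_int
      fun τ hτ => (h τ hτ).1
  · simpa [mul_comm] using intervalIntegral.integral_mono_on huv hf_int intervalIntegrable_const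
      fun τ hτ => (h τ hτ).2

theorem stronglyMeasurable_Qint {n : ℕ} {q : ℝ → EuclideanSpace ℝ (Fin n) → ℝ}
    (hq : Measurable fun p : ℝ × EuclideanSpace ℝ (Fin n) => q p.1 p.2) (t : ℝ) :
    StronglyMeasurable (Qint q t) := by
  have hq_swap : StronglyMeasurable fun p : EuclideanSpace ℝ (Fin n) × ℝ => q p.2 p.1 :=
    (hq.comp measurable_swap).stronglyMeasurable
  -- `∫ τ in 0..t` is by definition `∫ τ in Ioc 0 t - ∫ τ in Ioc t 0`
  exact hq_swap.integral_prod_right'.sub hq_swap.integral_prod_right'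

theorem setIntegral_exp_neg_le {X : Type*} [MeasurableSpace X] {μ : Measure X} {F g : X → ℝ}
    {S : Set X} {c : ℝ} (hS : MeasurableSet S) (hg : Integrable (fun x => exp (-g x)) μ)
    (hFS : ∀ x ∈ S, c + g x ≤ F x) :
    ∫ x in S, exp (-F x) ∂μ ≤ exp (-c) * ∫ x, exp (-g x) ∂μ := by
  rw [← integral_const_mul]
  have hcg : Integrable (fun x => exp (-c) * exp (-g x)) μ := hg.const_mul _
  calc ∫ x in S, exp (-F x) ∂μ ≤ ∫ x in S, exp (-c) * exp (-g x) ∂μ := by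
        refine integral_mono_of_nonneg (.of_forall fun x => (exp_pos _).le) hcg.restrict ?_
        filter_upwards [ae_restrict_mem hS] with x hx
        rw [← exp_add]
        exact exp_le_exp.2 (by linarith [hFS x hx])
    _ ≤ ∫ x, exp (-c) * exp (-g x) ∂μ :=
        setIntegral_le_integral hcg (.of_forall fun x => by positivity)

theorem exp_neg_mul_measureReal_le_integral_exp_neg {X : Type*} [MeasurableSpace X]
    {μ : Measure X} {F : X → ℝ} {B : Set X} {c : ℝ} (hB : MeasurableSet B) (hB_top : μ B ≠ ⊤)
    (hF : Integrable (fun x => exp (-F x)) μ) (hFB : ∀ x ∈ B, F x ≤ c) :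
    exp (-c) * μ.real B ≤ ∫ x, exp (-F x) ∂μ :=
  calc exp (-c) * μ.real B ≤ ∫ x in B, exp (-F x) ∂μ := by
        rw [mul_comm, ← smul_eq_mul]
        exact setIntegral_ge_of_const_le hB hB_top
          (fun x hx => exp_le_exp.2 (neg_le_neg (hFB x hx))) hF.integrableOn
    _ ≤ ∫ x, exp (-F x) ∂μ := setIntegral_le_integral hF (.of_forall fun x => (exp_pos _).le)

theorem tendsto_setIntegral_exp_neg_div_integral_exp_neg {X : Type*} [MeasurableSpace X]
    {μ : Measure X} {F : ℝ → X → ℝ} {g : X → ℝ} {S B : Set X} {a b : ℝ} (hba : b < a)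
    (hS : MeasurableSet S) (hB : MeasurableSet B) (hB_pos : μ B ≠ 0) (hB_top : μ B ≠ ⊤)
    (hg : Integrable (fun x => exp (-g x)) μ)
    (hF : ∀ᶠ t in atTop, Integrable (fun x => exp (-F t x)) μ)
    (hFS : ∀ᶠ t in atTop, ∀ x ∈ S, a * t + g x ≤ F t x)
    (hFB : ∀ᶠ t in atTop, ∀ x ∈ B, F t x ≤ b * t) :
    Tendsto (fun t => (∫ x in S, exp (-F t x) ∂μ) / ∫ x, exp (-F t x) ∂μ) atTop (𝓝 0) := by
  set I := ∫ x, exp (-g x) ∂μ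
  have hV : 0 < μ.real B := ENNReal.toReal_pos hB_pos hB_top
  have h_lim : Tendsto (fun t => I / μ.real B * exp (-((a - b) * t))) atTop (𝓝 0) := by
    simpa using (tendsto_exp_neg_atTop_nhds_zero.comp
      (tendsto_id.const_mul_atTop (sub_pos.2 hba))).const_mul (I / μ.real B)
  refine tendsto_of_tendsto_of_tendsto_of_le_of_le' tendsto_const_nhds h_lim
    (.of_forall fun t => div_nonneg (integral_nonneg fun x => (exp_pos _).le)
      (integral_nonneg fun x => (exp_pos _).le)) ?_
  filter_upwards [hF, hFS, hFB] with t hFt hFSt hFBt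
  have h_num := setIntegral_exp_neg_le hS hg hFSt
  have h_den := exp_neg_mul_measureReal_le_integral_exp_neg hB hB_top hFt hFBt
  calc (∫ x in S, exp (-F t x) ∂μ) / ∫ x, exp (-F t x) ∂μ
      ≤ exp (-(a * t)) * I / (exp (-(b * t)) * μ.real B) :=
        div_le_div₀ (by positivity) h_num (by positivity) h_den
    _ = I / μ.real B * exp (-((a - b) * t)) := by
        rw [show -((a - b) * t) = -(a * t) - -(b * t) by ring, exp_sub]
        field_simp

theorem stmt4_general {n : ℕ}
    (ψ : EuclideanSpace ℝ (Fin n) → ℝ) (hψ_cont : Continuous ψ)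
    (hψ_pos : ∀ ξ, ξ ≠ 0 → 0 < ψ ξ)
    (hψ_infty : Tendsto ψ (cocompact (EuclideanSpace ℝ (Fin n))) atTop)
    (hψ_growth : ∀ ε : ℝ, 0 < ε → ∃ Cε : ℝ, 0 ≤ Cε ∧ ∀ ξ, ψ ξ ≤ Cε * ‖ξ‖ ^ 2 + ε)
    (hψ_int : ∀ c : ℝ, 0 < c → Integrable (fun ξ => Real.exp (-(c * ψ ξ))))
    (q : ℝ → EuclideanSpace ℝ (Fin n) → ℝ)
    (hq_meas : Measurable (fun p : ℝ × EuclideanSpace ℝ (Fin n) => q p.1 p.2))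
    (κ₀ κ₁ : ℝ) (hκ₀ : 0 < κ₀) (hκ : κ₀ ≤ κ₁)
    (hq_bound : ∀ τ, 0 ≤ τ → ∀ ξ, κ₀ * ψ ξ ≤ q τ ξ ∧ q τ ξ ≤ κ₁ * ψ ξ)
    (δ : ℝ) (hδ : 0 < δ) :
    Tendsto (fun t =>
        (∫ ξ in {ξ : EuclideanSpace ℝ (Fin n) | δ < ‖ξ‖}, Real.exp (-(Qint q t ξ))) /
          ∫ ξ, Real.exp (-(Qint q t ξ)))
      atTop (𝓝 0) := by
  obtain ⟨m, hm, hψ_ge⟩ := exists_pos_le_of_tendsto_cocompact hψ_cont hψ_infty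
    (isClosed_le continuous_const continuous_norm) fun ξ (hξ : δ ≤ ‖ξ‖) =>
      hψ_pos ξ (by rintro rfl; simp at hξ; linarith)
  have hψ_zero : ψ 0 ≤ 0 := le_of_forall_pos_le_add fun ε hε => by
    obtain ⟨C, -, hC⟩ := hψ_growth ε hε
    simpa using hC 0
  obtain ⟨r, hr, hr_ball⟩ := Metric.isOpen_iff.mp
    (isOpen_lt (hψ_cont.const_mul κ₁) continuous_const : IsOpen {ξ | κ₁ * ψ ξ < κ₀ * m / 2}) 0
    (show κ₁ * ψ 0 < κ₀ * m / 2 by nlinarith [mul_pos hκ₀ hm])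
  have hQ (t : ℝ) (ht : 0 ≤ t) (ξ) : Qint q t ξ ∈ Icc (t * (κ₀ * ψ ξ)) (t * (κ₁ * ψ ξ)) := by
    simpa [Qint] using intervalIntegral_mem_Icc_of_forall_mem_Icc
      (hq_meas.comp (measurable_id.prodMk measurable_const)) ht fun τ hτ => hq_bound τ hτ.1 ξ
  refine tendsto_setIntegral_exp_neg_div_integral_exp_neg (a := κ₀ * m) (b := κ₀ * m / 2)
    (g := fun ξ => κ₀ * ψ ξ - κ₀ * m) (by linarith [mul_pos hκ₀ hm])
    (measurableSet_lt measurable_const measurable_norm) measurableSet_ball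
    (Metric.measure_ball_pos volume 0 hr).ne' measure_ball_lt_top.ne ?_ ?_ ?_ ?_
  · refine ((hψ_int κ₀ hκ₀).const_mul (exp (κ₀ * m))).congr (.of_forall fun ξ => ?_)
    simp only [← exp_add]
    ring_nf
  · filter_upwards [eventually_gt_atTop 0] with t ht
    refine (hψ_int (κ₀ * t) (by positivity)).mono'
      (stronglyMeasurable_Qint hq_meas t).measurable.neg.exp.aestronglyMeasurable
      (.of_forall fun ξ => ?_)
    rw [norm_of_nonneg (exp_pos _).le]
    exact exp_le_exp.2 (by nlinarith [(hQ t ht.le ξ).1])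
  · filter_upwards [eventually_ge_atTop 1] with t ht ξ (hξ : δ < ‖ξ‖)
    nlinarith [(hQ t (by linarith) ξ).1, mul_nonneg (mul_nonneg hκ₀.le (sub_nonneg.2 ht))
      (sub_nonneg.2 (hψ_ge ξ hξ.le))]
  · filter_upwards [eventually_ge_atTop 0] with t ht ξ hξ
    nlinarith [(hQ t ht ξ).2, mul_le_mul_of_nonneg_left (hr_ball hξ).le ht]

theorem stmt4 {n : ℕ} (hn : 1 ≤ n)
    (ψ : EuclideanSpace ℝ (Fin n) → ℝ) (hψ_cont : Continuous ψ)
    (hψ_pos : ∀ ξ, ξ ≠ 0 → 0 < ψ ξ)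
    (hψ_infty : Tendsto ψ (cocompact (EuclideanSpace ℝ (Fin n))) atTop)
    (hψ_growth : ∀ ε : ℝ, 0 < ε → ∃ Cε : ℝ, 0 ≤ Cε ∧ ∀ ξ, ψ ξ ≤ Cε * ‖ξ‖ ^ 2 + ε)
    (hψ_int : ∀ c : ℝ, 0 < c → Integrable (fun ξ => Real.exp (-(c * ψ ξ))))
    (q : ℝ → EuclideanSpace ℝ (Fin n) → ℝ)
    (hq_meas : Measurable (fun p : ℝ × EuclideanSpace ℝ (Fin n) => q p.1 p.2))
    (κ₀ κ₁ : ℝ) (hκ₀ : 0 < κ₀) (hκ : κ₀ ≤ κ₁)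
    (hq_bound : ∀ τ, 0 ≤ τ → ∀ ξ, κ₀ * ψ ξ ≤ q τ ξ ∧ q τ ξ ≤ κ₁ * ψ ξ)
    (δ : ℝ) (hδ : 0 < δ) :
    Tendsto (fun t =>
        (∫ ξ in {ξ : EuclideanSpace ℝ (Fin n) | δ < ‖ξ‖}, Real.exp (-(Qint q t ξ))) /
          ∫ ξ, Real.exp (-(Qint q t ξ)))
      atTop (𝓝 0) :=
  stmt4_general ψ hψ_cont hψ_pos hψ_infty hψ_growth hψ_int q hq_meas κ₀ κ₁ hκ₀ hκ hq_bound δ hδ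
end

section
/- Let d be a metric on ℝⁿ such that every open d-ball B^d(0,r) is Lebesgue measurable with 0 < λ⁽ⁿ⁾(B^d(0,r)) < ∞ for all r > 0, and suppose the volume doubling property λ⁽ⁿ⁾(B^d(0,2r)) ≤ c₀ λ⁽ⁿ⁾(B^d(0,r)) holds for all r > 0 with a constant c₀ ≥ 1. Then there exist constants γ₁, γ₂ > 0, depending only on c₀, such that γ₁ λ⁽ⁿ⁾(B^d(0,1)) ≤ ∫₀^∞ λ⁽ⁿ⁾(B^d(0,√r)) e^{−r} dr ≤ γ₂ λ⁽ⁿ⁾(B^d(0,1)). -/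
open MeasureTheory Real

theorem stmt11 {n : ℕ} (hn : 1 ≤ n) (c₀ : ℝ) (hc₀ : 1 ≤ c₀) :
    ∃ γ₁ γ₂ : ℝ, 0 < γ₁ ∧ 0 < γ₂ ∧
      ∀ d : EuclideanSpace ℝ (Fin n) → EuclideanSpace ℝ (Fin n) → ℝ,
        (∀ x y, d x y = 0 ↔ x = y) →
        (∀ x y, d x y = d y x) →
        (∀ x y z, d x z ≤ d x y + d y z) →
        (∀ r : ℝ, 0 < r →
          MeasurableSet {ξ : EuclideanSpace ℝ (Fin n) | d 0 ξ < r}) →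
        (∀ r : ℝ, 0 < r →
          0 < volume {ξ : EuclideanSpace ℝ (Fin n) | d 0 ξ < r} ∧
            volume {ξ : EuclideanSpace ℝ (Fin n) | d 0 ξ < r} < ⊤) →
        (∀ r : ℝ, 0 < r →
          volume {ξ : EuclideanSpace ℝ (Fin n) | d 0 ξ < 2 * r} ≤
            ENNReal.ofReal c₀ * volume {ξ : EuclideanSpace ℝ (Fin n) | d 0 ξ < r}) →
        γ₁ * (volume {ξ : EuclideanSpace ℝ (Fin n) | d 0 ξ < 1}).toReal ≤
            (∫ r in Set.Ioi (0:ℝ),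
              (volume {ξ : EuclideanSpace ℝ (Fin n) | d 0 ξ < Real.sqrt r}).toReal *
                Real.exp (-r)) ∧
          (∫ r in Set.Ioi (0:ℝ),
              (volume {ξ : EuclideanSpace ℝ (Fin n) | d 0 ξ < Real.sqrt r}).toReal *
                Real.exp (-r)) ≤
            γ₂ * (volume {ξ : EuclideanSpace ℝ (Fin n) | d 0 ξ < 1}).toReal := by
  have hc₀0 : (0:ℝ) < c₀ := lt_of_lt_of_le one_pos hc₀
  set α : ℝ := Real.log c₀ / (2 * Real.log 2) with hαdef
  have hlog2 : (0:ℝ) < Real.log 2 := Real.log_pos one_lt_two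
  have hα0 : 0 ≤ α := div_nonneg (Real.log_nonneg hc₀) (by positivity)
  have hΓpos : 0 < Real.Gamma (α + 1) := Real.Gamma_pos_of_pos (by linarith)
  refine ⟨Real.exp (-1), c₀ * (1 + Real.Gamma (α + 1)), Real.exp_pos _, by positivity,
    ?_⟩
  intro d hd0 hsymm htri hmeas hvol hdbl
  -- basic facts about d
  have hdnn : ∀ ξ, 0 ≤ d 0 ξ := by
    intro ξ
    have h1 : d 0 0 ≤ d 0 ξ + d ξ 0 := htri 0 ξ 0
    have h2 : d 0 0 = 0 := (hd0 0 0).mpr rfl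
    have h3 : d ξ 0 = d 0 ξ := hsymm ξ 0
    linarith
  set B : ℝ → Set (EuclideanSpace ℝ (Fin n)) :=
    fun r => {ξ | d 0 ξ < r} with hBdef
  set V : ℝ → ℝ := fun r => (volume (B r)).toReal with hVdef
  have hBmono : ∀ {r s : ℝ}, r ≤ s → B r ⊆ B s := by
    intro r s hrs ξ hξ; exact lt_of_lt_of_le hξ hrs
  have hBneg : ∀ {r : ℝ}, r ≤ 0 → B r = ∅ := by
    intro r hr
    ext ξ; simp only [Set.mem_setOf_eq, Set.mem_empty_iff_false, iff_false, not_lt, hBdef]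
    exact le_trans hr (hdnn ξ)
  have hfin : ∀ r : ℝ, volume (B r) ≠ ⊤ := by
    intro r
    rcases lt_or_ge 0 r with hr | hr
    · exact (hvol r hr).2.ne
    · rw [hBneg hr]; simp
  have hVmono : ∀ {r s : ℝ}, r ≤ s → V r ≤ V s := by
    intro r s hrs
    exact ENNReal.toReal_mono (hfin s) (measure_mono (hBmono hrs))
  have hV1pos : 0 < V 1 :=
    ENNReal.toReal_pos (hvol 1 one_pos).1.ne' (hvol 1 one_pos).2.ne
  have hVnn : ∀ r, 0 ≤ V r := fun r => ENNReal.toReal_nonneg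
  have hdblR : ∀ r : ℝ, 0 < r → V (2 * r) ≤ c₀ * V r := by
    intro r hr
    have h := hdbl r hr
    have h2 : (ENNReal.ofReal c₀ * volume (B r)).toReal = c₀ * V r := by
      rw [ENNReal.toReal_mul, ENNReal.toReal_ofReal hc₀0.le]
    calc V (2 * r) ≤ (ENNReal.ofReal c₀ * volume (B r)).toReal :=
          ENNReal.toReal_mono (ENNReal.mul_ne_top ENNReal.ofReal_ne_top (hfin r)) h
      _ = c₀ * V r := h2
  have hpow : ∀ k : ℕ, V (2 ^ k) ≤ c₀ ^ k * V 1 := by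
    intro k
    induction k with
    | zero => simp
    | succ k ih =>
      have h1 : V (2 ^ (k + 1)) ≤ c₀ * V (2 ^ k) := by
        have := hdblR (2 ^ k) (by positivity)
        rw [show (2:ℝ) * 2 ^ k = 2 ^ (k+1) by ring] at this
        exact this
      calc V (2 ^ (k + 1)) ≤ c₀ * V (2 ^ k) := h1
        _ ≤ c₀ * (c₀ ^ k * V 1) := by
            exact mul_le_mul_of_nonneg_left ih hc₀0.le
        _ = c₀ ^ (k + 1) * V 1 := by ring
  -- key pointwise bound
  have hkey : ∀ r : ℝ, 0 < r → V (Real.sqrt r) ≤ c₀ * (1 + r ^ α) * V 1 := by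
    intro r hr
    have hrα : 0 ≤ r ^ α := Real.rpow_nonneg hr.le α
    rcases le_or_gt r 1 with hr1 | hr1
    · have h1 : V (Real.sqrt r) ≤ V 1 := hVmono (by
        rw [show (1:ℝ) = Real.sqrt 1 by simp]
        exact Real.sqrt_le_sqrt hr1)
      have h2 : V 1 ≤ c₀ * (1 + r ^ α) * V 1 :=
        le_mul_of_one_le_left hV1pos.le (by nlinarith)
      linarith
    · have hs1 : 1 ≤ Real.sqrt r := by
        rw [show (1:ℝ) = Real.sqrt 1 by simp]
        exact Real.sqrt_le_sqrt hr1.le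
      have hspos : 0 < Real.sqrt r := lt_of_lt_of_le one_pos hs1
      set L : ℝ := Real.logb 2 (Real.sqrt r) with hLdef
      have hL0 : 0 ≤ L := Real.logb_nonneg one_lt_two hs1
      set k : ℕ := ⌈L⌉₊ with hkdef
      have hk1 : Real.sqrt r ≤ 2 ^ k := by
        have h1 : Real.sqrt r = (2:ℝ) ^ L := (Real.rpow_logb two_pos (by norm_num) hspos).symm
        have h2 : (2:ℝ) ^ L ≤ (2:ℝ) ^ (k:ℝ) :=
          Real.rpow_le_rpow_of_exponent_le one_le_two (Nat.le_ceil L)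
        rw [h1, ← Real.rpow_natCast 2 k]
        exact h2
      have hk2 : (k:ℝ) ≤ L + 1 := (Nat.ceil_lt_add_one hL0).le
      have hck : (c₀:ℝ) ^ k ≤ c₀ * r ^ α := by
        have h1 : (c₀:ℝ) ^ k = c₀ ^ (k:ℝ) := (Real.rpow_natCast c₀ k).symm
        have h2 : c₀ ^ (k:ℝ) ≤ c₀ ^ (L + 1) :=
          Real.rpow_le_rpow_of_exponent_le hc₀ hk2
        have h3 : c₀ ^ (L + 1) = c₀ * c₀ ^ L := by
          rw [Real.rpow_add hc₀0, Real.rpow_one]; ring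
        have h4 : c₀ ^ L = r ^ α := by
          rw [Real.rpow_def_of_pos hc₀0, Real.rpow_def_of_pos hr]
          congr 1
          rw [hLdef, Real.logb, Real.log_sqrt hr.le, hαdef]
          field_simp
        rw [h1]; rw [h4] at h3; rw [h3] at h2; exact h2
      have h5 : V (Real.sqrt r) ≤ c₀ ^ k * V 1 :=
        le_trans (hVmono hk1) (hpow k)
      calc V (Real.sqrt r) ≤ c₀ ^ k * V 1 := h5
        _ ≤ (c₀ * r ^ α) * V 1 := mul_le_mul_of_nonneg_right hck hV1pos.le
        _ ≤ c₀ * (1 + r ^ α) * V 1 := by nlinarith [hV1pos.le]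
  -- measurability of the integrand
  have hFmono : Monotone (fun r : ℝ => V (Real.sqrt r)) := by
    intro r s hrs
    exact hVmono (Real.sqrt_le_sqrt hrs)
  have hFmeas : Measurable (fun r : ℝ => V (Real.sqrt r)) := hFmono.measurable
  set f : ℝ → ℝ := fun r => V (Real.sqrt r) * Real.exp (-r) with hfdef
  have hfmeas : Measurable f := hFmeas.mul (Real.measurable_exp.comp measurable_neg)
  have hfnn : ∀ r, 0 ≤ f r := fun r => mul_nonneg (hVnn _) (Real.exp_pos _).le
  -- dominating function
  set g : ℝ → ℝ := fun r => c₀ * V 1 * Real.exp (-r)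
      + (c₀ * V 1) * (Real.exp (-r) * r ^ α) with hgdef
  have hg1 : IntegrableOn (fun r : ℝ => Real.exp (-r)) (Set.Ioi (0:ℝ)) := by
    have := Real.GammaIntegral_convergent (s := 1) one_pos
    simpa using this
  have hg2 : IntegrableOn (fun r : ℝ => Real.exp (-r) * r ^ α) (Set.Ioi (0:ℝ)) := by
    have := Real.GammaIntegral_convergent (s := α + 1) (by linarith)
    simpa using this
  have hgint : IntegrableOn g (Set.Ioi (0:ℝ)) :=
    (hg1.const_mul _).add (hg2.const_mul _)
  have hfg : ∀ r ∈ Set.Ioi (0:ℝ), f r ≤ g r := by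
    intro r hr
    simp only [Set.mem_Ioi] at hr
    have h1 := hkey r hr
    have h2 : f r ≤ (c₀ * (1 + r ^ α) * V 1) * Real.exp (-r) :=
      mul_le_mul_of_nonneg_right h1 (Real.exp_pos _).le
    calc f r ≤ (c₀ * (1 + r ^ α) * V 1) * Real.exp (-r) := h2
      _ = g r := by rw [hgdef]; ring
  have hfi : IntegrableOn f (Set.Ioi (0:ℝ)) := by
    refine Integrable.mono' hgint hfmeas.aestronglyMeasurable ?_
    rw [ae_restrict_iff' measurableSet_Ioi]
    filter_upwards with r hr
    rw [Real.norm_eq_abs, abs_of_nonneg (hfnn r)]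
    exact hfg r hr
  constructor
  · -- lower bound
    have h1 : (∫ r in Set.Ioi (1:ℝ), f r) ≤ ∫ r in Set.Ioi (0:ℝ), f r := by
      refine setIntegral_mono_set hfi ?_ ?_
      · filter_upwards with r; exact hfnn r
      · exact HasSubset.Subset.eventuallyLE (Set.Ioi_subset_Ioi zero_le_one)
    have h2 : (∫ r in Set.Ioi (1:ℝ), V 1 * Real.exp (-r)) ≤ ∫ r in Set.Ioi (1:ℝ), f r := by
      refine setIntegral_mono_on ((hg1.mono_set (Set.Ioi_subset_Ioi zero_le_one)).const_mul (V 1))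
        (hfi.mono_set (Set.Ioi_subset_Ioi zero_le_one)) measurableSet_Ioi ?_
      intro r hr
      simp only [Set.mem_Ioi] at hr
      have hs1 : 1 ≤ Real.sqrt r := by
        rw [show (1:ℝ) = Real.sqrt 1 by simp]
        exact Real.sqrt_le_sqrt hr.le
      exact mul_le_mul_of_nonneg_right (hVmono hs1) (Real.exp_pos _).le
    have h3 : (∫ r in Set.Ioi (1:ℝ), V 1 * Real.exp (-r)) = Real.exp (-1) * V 1 := by
      rw [integral_const_mul, integral_exp_neg_Ioi]; ring
    calc Real.exp (-1) * V 1 = ∫ r in Set.Ioi (1:ℝ), V 1 * Real.exp (-r) := h3.symm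
      _ ≤ ∫ r in Set.Ioi (1:ℝ), f r := h2
      _ ≤ ∫ r in Set.Ioi (0:ℝ), f r := h1
  · -- upper bound
    have h1 : (∫ r in Set.Ioi (0:ℝ), f r) ≤ ∫ r in Set.Ioi (0:ℝ), g r :=
      setIntegral_mono_on hfi hgint measurableSet_Ioi hfg
    have h2 : (∫ r in Set.Ioi (0:ℝ), g r) = c₀ * (1 + Real.Gamma (α + 1)) * V 1 := by
      rw [hgdef]
      rw [integral_add (hg1.const_mul _) (hg2.const_mul _), integral_const_mul,
        integral_const_mul, integral_exp_neg_Ioi]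
      have h3 : (∫ r in Set.Ioi (0:ℝ), Real.exp (-r) * r ^ α) = Real.Gamma (α + 1) := by
        rw [Real.Gamma_eq_integral (by linarith : (0:ℝ) < α + 1)]
        norm_num
      rw [h3]
      norm_num
      ring
    calc (∫ r in Set.Ioi (0:ℝ), f r) ≤ ∫ r in Set.Ioi (0:ℝ), g r := h1
      _ = c₀ * (1 + Real.Gamma (α + 1)) * V 1 := h2
end
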